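/- Let k ≥ 2, let f ∈ C^k([0,l]) with 0 ≤ l ≤ 1, let σ_{k−1} ∈ {±1}, and let ε > 0, κ > 0. Assume σ_{k−1} f^{(k−1)}(0) ≥ −ε and σ_{k−1} f^{(k−1)}(l) ≥ −ε, and |f^{(k)}(t)| ≥ κ for all t ∈ [0,l]. Then either σ_{k−1} f^{(k−1)}(t) ≥ κ t − ε for all t ∈ [0,l], or σ_{k−1} f^{(k−1)}(t) ≥ κ (l − t) − ε for all t ∈ [0,l]. -/

import Mathlib

open Set

/-! By Darboux's theorem the derivative `σ f^{(k)}` of `H := σ f^{(k-1)}` cannot change sign on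
`[0, l]`, so `|f^{(k)}| ≥ κ` forces `H' ≥ κ` throughout or `H' ≤ -κ` throughout. In the first case
`H` grows at rate at least `κ` from `H 0 ≥ -ε`; in the second it decreases at rate at least `κ`
down to `H l ≥ -ε`. -/

theorem Set.OrdConnected.forall_le_or_forall_le_neg_of_hasDerivWithinAt {s : Set ℝ}
    (hs : s.OrdConnected) {f f' : ℝ → ℝ} (hf : ∀ x ∈ s, HasDerivWithinAt f (f' x) s x)
    {κ : ℝ} (hκ : 0 < κ) (hbound : ∀ x ∈ s, κ ≤ |f' x|) :
    (∀ x ∈ s, κ ≤ f' x) ∨ (∀ x ∈ s, f' x ≤ -κ) := by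
  by_contra! ⟨⟨x, hx, hx'⟩, ⟨y, hy, hy'⟩⟩
  have hxneg : f' x ≤ -κ := (le_abs'.mp (hbound x hx)).resolve_right hx'.not_ge
  have hypos : κ ≤ f' y := (le_abs'.mp (hbound y hy)).resolve_left hy'.not_ge
  obtain ⟨z, hz, hz0⟩ : (0 : ℝ) ∈ f' '' s :=
    (hs.image_hasDerivWithinAt hf).out ⟨x, hx, rfl⟩ ⟨y, hy, rfl⟩ ⟨by linarith, by linarith⟩
  have := hbound z hz
  rw [hz0, abs_zero] at this
  linarith

theorem linear_growth_dichotomy_of_le_abs_deriv {f f' : ℝ → ℝ} {a b κ : ℝ} (hκ : 0 < κ)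
    (hf : ContinuousOn f (Icc a b)) (hderiv : ∀ x ∈ Ioo a b, HasDerivAt f (f' x) x)
    (hbound : ∀ x ∈ Ioo a b, κ ≤ |f' x|) :
    (∀ t ∈ Icc a b, f a + κ * (t - a) ≤ f t) ∨ (∀ t ∈ Icc a b, f b + κ * (b - t) ≤ f t) := by
  rcases ordConnected_Ioo.forall_le_or_forall_le_neg_of_hasDerivWithinAt
    (fun x hx ↦ (hderiv x hx).hasDerivWithinAt) hκ hbound with hpos | hneg
  · left
    have hmono : MonotoneOn (fun t ↦ f t - t * κ) (Icc a b) := by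
      refine monotoneOn_of_hasDerivWithinAt_nonneg (f' := fun x ↦ f' x - κ) (convex_Icc a b)
        (hf.sub (continuousOn_id.mul continuousOn_const)) ?_ ?_ <;> rw [interior_Icc]
      · exact fun x hx ↦ ((hderiv x hx).sub (hasDerivAt_mul_const κ)).hasDerivWithinAt
      · exact fun x hx ↦ by linarith [hpos x hx]
    intro t ht
    have : f a - a * κ ≤ f t - t * κ := hmono (left_mem_Icc.2 (ht.1.trans ht.2)) ht ht.1
    linarith
  · right
    have hanti : AntitoneOn (fun t ↦ f t + t * κ) (Icc a b) := by
      refine antitoneOn_of_hasDerivWithinAt_nonpos (f' := fun x ↦ f' x + κ) (convex_Icc a b)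
        (hf.add (continuousOn_id.mul continuousOn_const)) ?_ ?_ <;> rw [interior_Icc]
      · exact fun x hx ↦ ((hderiv x hx).add (hasDerivAt_mul_const κ)).hasDerivWithinAt
      · exact fun x hx ↦ by linarith [hneg x hx]
    intro t ht
    have : f b + b * κ ≤ f t + t * κ := hanti ht (right_mem_Icc.2 (ht.1.trans ht.2)) ht.2
    linarith

theorem ContDiffOn.continuousOn_iteratedDerivWithin_Icc {f : ℝ → ℝ} {a b : ℝ} {n m : ℕ}
    (hf : ContDiffOn ℝ n f (Icc a b)) (hmn : m ≤ n) :
    ContinuousOn (iteratedDerivWithin m f (Icc a b)) (Icc a b) := by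
  rcases lt_or_ge a b with hab | hba
  · exact hf.continuousOn_iteratedDerivWithin (by exact_mod_cast hmn) (uniqueDiffOn_Icc hab)
  · exact (subsingleton_Icc_of_ge hba).continuousOn _

theorem ContDiffOn.hasDerivAt_iteratedDerivWithin_Icc {f : ℝ → ℝ} {a b x : ℝ} {n : ℕ}
    (hf : ContDiffOn ℝ (n + 1 : ℕ) f (Icc a b)) (hx : x ∈ Ioo a b) :
    HasDerivAt (iteratedDerivWithin n f (Icc a b))
      (iteratedDerivWithin (n + 1) f (Icc a b) x) x := by
  have hdiff := hf.differentiableOn_iteratedDerivWithin (m := n) (by exact_mod_cast n.lt_succ_self)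
    (uniqueDiffOn_Icc (hx.1.trans hx.2))
  rw [iteratedDerivWithin_succ]
  exact (hdiff x (Ioo_subset_Icc_self hx)).hasDerivWithinAt.hasDerivAt (Icc_mem_nhds hx.1 hx.2)

theorem penultimate_derivative_dichotomy_general (k : ℕ) (hk : 2 ≤ k) (l : ℝ)
    (f : ℝ → ℝ) (hf : ContDiffOn ℝ k f (Icc 0 l))
    (σ : ℝ) (hσ : σ = 1 ∨ σ = -1)
    (ε κ : ℝ) (hκ : 0 < κ)
    (hend0 : -ε ≤ σ * iteratedDerivWithin (k - 1) f (Icc 0 l) 0)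
    (hendl : -ε ≤ σ * iteratedDerivWithin (k - 1) f (Icc 0 l) l)
    (hfk : ∀ t ∈ Icc 0 l, κ ≤ |iteratedDerivWithin k f (Icc 0 l) t|) :
    (∀ t ∈ Icc 0 l, κ * t - ε ≤ σ * iteratedDerivWithin (k - 1) f (Icc 0 l) t) ∨
    (∀ t ∈ Icc 0 l, κ * (l - t) - ε ≤ σ * iteratedDerivWithin (k - 1) f (Icc 0 l) t) := by
  obtain ⟨n, rfl⟩ : ∃ n, k = n + 1 := ⟨k - 1, by omega⟩
  simp only [Nat.add_sub_cancel] at hend0 hendl ⊢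
  have hσ_abs : |σ| = 1 := by rcases hσ with rfl | rfl <;> norm_num
  have hgrowth := linear_growth_dichotomy_of_le_abs_deriv
    (f := fun t ↦ σ * iteratedDerivWithin n f (Icc 0 l) t) hκ
    (continuousOn_const.mul (hf.continuousOn_iteratedDerivWithin_Icc n.le_succ))
    (fun x hx ↦ (hf.hasDerivAt_iteratedDerivWithin_Icc hx).const_mul σ)
    (fun x hx ↦ by rw [abs_mul, hσ_abs, one_mul]; exact hfk x (Ioo_subset_Icc_self hx))
  refine hgrowth.imp (fun h t ht ↦ ?_) (fun h t ht ↦ ?_) <;> linarith [h t ht]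

/-- if `σ_{k-1} f^{(k-1)} ≥ -ε` at both endpoints of `[0, l]` and
`|f^{(k)}| ≥ κ` on `[0, l]`, then either `σ_{k-1} f^{(k-1)}(t) ≥ κ t - ε` for all `t`,
or `σ_{k-1} f^{(k-1)}(t) ≥ κ (l - t) - ε` for all `t ∈ [0, l]`. -/
theorem penultimate_derivative_dichotomy (k : ℕ) (hk : 2 ≤ k) (l : ℝ)
    (hl0 : 0 ≤ l) (hl1 : l ≤ 1)
    (f : ℝ → ℝ) (hf : ContDiffOn ℝ k f (Icc 0 l))
    (σ : ℝ) (hσ : σ = 1 ∨ σ = -1)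
    (ε κ : ℝ) (hε : 0 < ε) (hκ : 0 < κ)
    (hend0 : -ε ≤ σ * iteratedDerivWithin (k - 1) f (Icc 0 l) 0)
    (hendl : -ε ≤ σ * iteratedDerivWithin (k - 1) f (Icc 0 l) l)
    (hfk : ∀ t ∈ Icc 0 l, κ ≤ |iteratedDerivWithin k f (Icc 0 l) t|) :
    (∀ t ∈ Icc 0 l, κ * t - ε ≤ σ * iteratedDerivWithin (k - 1) f (Icc 0 l) t) ∨
    (∀ t ∈ Icc 0 l, κ * (l - t) - ε ≤ σ * iteratedDerivWithin (k - 1) f (Icc 0 l) t) :=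
  penultimate_derivative_dichotomy_general k hk l f hf σ hσ ε κ hκ hend0 hendl hfk
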